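/- arXiv:1805.09694 — 2 statements merged into one kernel-verified Lean document; each statement's English description precedes it below -/
import Mathlib

section
/- Let a ≤ b be real numbers and let J ⊆ ℝ be any nonempty interval. Then the k-vector space Hom(k_{[a,b]}, k_J) is one-dimensional over k if J is a closed (hence compact) interval with J ⊆ [a,b], and is zero otherwise (in particular it vanishes whenever J is open or half-open, and whenever J is closed but not contained in [a,b]). -/
open CategoryTheory TopologicalSpace Set Topology

noncomputable section

variable (k : Type) [Field k]

/-- The support of the function `s : V ∩ I → k` is closed in `V`. -/
def SuppClosedIn (I V : Set ℝ) (s : ↥(V ∩ I) → k) : Prop :=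
  ∀ x ∈ V, x ∈ closure {y : ℝ | ∃ h : y ∈ V ∩ I, s ⟨y, h⟩ ≠ 0} →
    ∃ h : x ∈ V ∩ I, s ⟨x, h⟩ ≠ 0

lemma zero_locConst (I V : Set ℝ) :
    IsLocallyConstant (0 : ↥(V ∩ I) → k) ∧ SuppClosedIn k I V 0 := by
  constructor
  · exact IsLocallyConstant.const 0
  · intro x _ hx
    exfalso
    have h0 : {y : ℝ | ∃ h : y ∈ V ∩ I, (0 : ↥(V ∩ I) → k) ⟨y, h⟩ ≠ 0} = ∅ := by
      ext y; simp
    rw [h0, closure_empty] at hx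
    exact hx

/-- The sections over `V` of the sheaf `k_I`: locally constant functions on `V ∩ I`
whose support is closed in `V`. -/
def secSub (I V : Set ℝ) : Submodule k (↥(V ∩ I) → k) where
  carrier := {s | IsLocallyConstant s ∧ SuppClosedIn k I V s}
  zero_mem' := zero_locConst k I V
  add_mem' := by
    rintro s t ⟨hslc, hscl⟩ ⟨htlc, htcl⟩
    have hlc : IsLocallyConstant (s + t) := hslc.comp₂ htlc (· + ·)
    refine ⟨hlc, ?_⟩
    intro x hxV hxcl
    have hsub : {y : ℝ | ∃ h : y ∈ V ∩ I, (s + t) ⟨y, h⟩ ≠ 0}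
        ⊆ {y : ℝ | ∃ h : y ∈ V ∩ I, s ⟨y, h⟩ ≠ 0}
          ∪ {y : ℝ | ∃ h : y ∈ V ∩ I, t ⟨y, h⟩ ≠ 0} := by
      rintro y ⟨h, hy⟩
      by_cases hsy : s ⟨y, h⟩ = 0
      · refine Or.inr ⟨h, fun h0 => hy ?_⟩
        show s ⟨y, h⟩ + t ⟨y, h⟩ = 0
        rw [hsy, h0, add_zero]
      · exact Or.inl ⟨h, hsy⟩
    have hxVI : x ∈ V ∩ I := by
      have hcl2 := closure_mono hsub hxcl
      rw [closure_union] at hcl2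
      rcases hcl2 with h | h
      · exact (hscl x hxV h).choose
      · exact (htcl x hxV h).choose
    refine ⟨hxVI, ?_⟩
    have hA : IsClosed {y : ↥(V ∩ I) | (s + t) y ≠ 0} := by
      have h1 : IsOpen ((s + t) ⁻¹' {0}) := hlc {0}
      have h2 := h1.isClosed_compl
      have h3 : ((s + t) ⁻¹' {0})ᶜ = {y : ↥(V ∩ I) | (s + t) y ≠ 0} := by
        ext y; simp
      exact h3 ▸ h2
    have hmem : (⟨x, hxVI⟩ : ↥(V ∩ I)) ∈ closure {y : ↥(V ∩ I) | (s + t) y ≠ 0} := by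
      rw [closure_subtype]
      have himg : Subtype.val '' {y : ↥(V ∩ I) | (s + t) y ≠ 0}
          = {y : ℝ | ∃ h : y ∈ V ∩ I, (s + t) ⟨y, h⟩ ≠ 0} := by
        ext y
        constructor
        · rintro ⟨z, hz, rfl⟩; exact ⟨z.2, hz⟩
        · rintro ⟨h, hy⟩; exact ⟨⟨y, h⟩, hy, rfl⟩
      rw [himg]
      exact hxcl
    have := hA.closure_eq ▸ hmem
    exact this
  smul_mem' := by
    intro c s hs
    rcases hs with ⟨hlc, hcl⟩
    by_cases hc : c = 0
    · subst hc
      rw [zero_smul]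
      exact zero_locConst k I V
    · constructor
      · exact hlc.comp (fun a => c • a)
      · intro x hxV hxcl
        have hset : {y : ℝ | ∃ h : y ∈ V ∩ I, (c • s) ⟨y, h⟩ ≠ 0}
            = {y : ℝ | ∃ h : y ∈ V ∩ I, s ⟨y, h⟩ ≠ 0} := by
          ext y
          constructor
          · rintro ⟨h, hy⟩
            refine ⟨h, fun h0 => hy ?_⟩
            show c • s ⟨y, h⟩ = 0
            rw [h0, smul_zero]
          · rintro ⟨h, hy⟩
            exact ⟨h, by simpa [smul_eq_zero, hc] using hy⟩
        rw [hset] at hxcl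
        obtain ⟨h, hy⟩ := hcl x hxV hxcl
        exact ⟨h, by simpa [smul_eq_zero, hc] using hy⟩
/-- Restriction of sections. -/
def resFun (I : Set ℝ) {V W : Set ℝ} (h : W ⊆ V) (s : ↥(V ∩ I) → k) : ↥(W ∩ I) → k :=
  fun y => s ⟨y.1, ⟨h y.2.1, y.2.2⟩⟩

lemma resFun_mem (I : Set ℝ) {V W : Set ℝ} (h : W ⊆ V) (s : ↥(V ∩ I) → k)
    (hs : s ∈ secSub k I V) : resFun k I h s ∈ secSub k I W := by
  obtain ⟨hlc, hcl⟩ := hs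
  constructor
  · exact hlc.comp_continuous (Continuous.subtype_mk continuous_subtype_val _)
  · intro x hxW hxcl
    have hsub : {y : ℝ | ∃ h' : y ∈ W ∩ I, resFun k I h s ⟨y, h'⟩ ≠ 0}
        ⊆ {y : ℝ | ∃ h' : y ∈ V ∩ I, s ⟨y, h'⟩ ≠ 0} := by
      rintro y ⟨h', hy⟩
      exact ⟨⟨h h'.1, h'.2⟩, hy⟩
    obtain ⟨hxVI, hne⟩ := hcl x (h hxW) (closure_mono hsub hxcl)
    exact ⟨⟨hxW, hxVI.2⟩, hne⟩

/-- Restriction as a linear map. -/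
def resLM (I : Set ℝ) {V W : Set ℝ} (h : W ⊆ V) : secSub k I V →ₗ[k] secSub k I W where
  toFun s := ⟨resFun k I h s.1, resFun_mem k I h s.1 s.2⟩
  map_add' s t := rfl
  map_smul' c s := rfl

/-- The presheaf `k_I` on `ℝ`. -/
def intervalPresheaf (I : Set ℝ) : TopCat.Presheaf (ModuleCat.{0} k) (TopCat.of ℝ) where
  obj V := ModuleCat.of k (secSub k I V.unop.1)
  map {V W} f := ModuleCat.ofHom (resLM k I (leOfHom f.unop))
  map_id V := rfl
  map_comp f g := rfl
theorem intervalPresheaf_isSheaf (I : Set ℝ) : (intervalPresheaf k I).IsSheaf := by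
  classical
  rw [TopCat.Presheaf.isSheaf_iff_isSheafUniqueGluing]
  intro ι U sf hcomp
  change ∀ i, secSub k I (U i).1 at sf
  -- pointwise compatibility
  have key : ∀ (i j : ι) (x : ℝ) (hxi : x ∈ (U i).1 ∩ I) (hxj : x ∈ (U j).1 ∩ I),
      (sf i).1 ⟨x, hxi⟩ = (sf j).1 ⟨x, hxj⟩ := by
    intro i j x hxi hxj
    have h := hcomp i j
    have hmem : x ∈ (U i ⊓ U j).1 ∩ I := ⟨⟨hxi.1, hxj.1⟩, hxi.2⟩
    have h2 := congrFun (congrArg Subtype.val h) ⟨x, hmem⟩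
    exact h2
  have hmemS : ∀ x : ↥((iSup U : Opens (TopCat.of ℝ)).1 ∩ I), ∃ i, x.1 ∈ U i := by
    intro x
    exact Opens.mem_iSup.mp x.2.1
  set idx : ↥((iSup U : Opens (TopCat.of ℝ)).1 ∩ I) → ι := fun x => (hmemS x).choose with hidxdef
  have hidx : ∀ x, x.1 ∈ U (idx x) := fun x => (hmemS x).choose_spec
  set s₀ : ↥((iSup U : Opens (TopCat.of ℝ)).1 ∩ I) → k :=
    fun x => (sf (idx x)).1 ⟨x.1, ⟨hidx x, x.2.2⟩⟩ with hs₀def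
  have hs₀ : ∀ (x : ↥((iSup U : Opens (TopCat.of ℝ)).1 ∩ I)) (i : ι) (hx : x.1 ∈ U i),
      s₀ x = (sf i).1 ⟨x.1, ⟨hx, x.2.2⟩⟩ :=
    fun x i hx => key (idx x) i x.1 ⟨hidx x, x.2.2⟩ ⟨hx, x.2.2⟩
  have hlc : IsLocallyConstant s₀ := by
    rw [IsLocallyConstant.iff_exists_open]
    intro x
    obtain ⟨i, hi⟩ := hmemS x
    have hlci : IsLocallyConstant ((sf i).1 : ↥((U i).1 ∩ I) → k) := (sf i).2.1
    obtain ⟨W, hWopen, hpW, hWconst⟩ := hlci.exists_open (⟨x.1, ⟨hi, x.2.2⟩⟩ : ↥((U i).1 ∩ I))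
    obtain ⟨O, hOopen, hWO⟩ := isOpen_induced_iff.mp hWopen
    subst hWO
    refine ⟨Subtype.val ⁻¹' (O ∩ (U i).1), (hOopen.inter (U i).2).preimage continuous_subtype_val,
      ⟨hpW, hi⟩, ?_⟩
    intro y hy
    have hyi : y.1 ∈ U i := hy.2
    rw [hs₀ y i hyi, hs₀ x i hi]
    exact hWconst ⟨y.1, ⟨hyi, y.2.2⟩⟩ hy.1
  have hscl : SuppClosedIn k I (iSup U : Opens (TopCat.of ℝ)).1 s₀ := by
    intro x hxS hxcl
    obtain ⟨i, hi⟩ := Opens.mem_iSup.mp hxS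
    have h1 : x ∈ closure ({y : ℝ | ∃ h : y ∈ (iSup U : Opens (TopCat.of ℝ)).1 ∩ I, s₀ ⟨y, h⟩ ≠ 0}
        ∩ (U i).1) := by
      rw [mem_closure_iff] at hxcl ⊢
      intro O hO hxO
      obtain ⟨z, hz⟩ := hxcl (O ∩ (U i).1) (hO.inter (U i).2) ⟨hxO, hi⟩
      exact ⟨z, hz.1.1, hz.2, hz.1.2⟩
    have hsub : {y : ℝ | ∃ h : y ∈ (iSup U : Opens (TopCat.of ℝ)).1 ∩ I, s₀ ⟨y, h⟩ ≠ 0}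
        ∩ (U i).1 ⊆ {y : ℝ | ∃ h : y ∈ (U i).1 ∩ I, (sf i).1 ⟨y, h⟩ ≠ 0} := by
      rintro y ⟨⟨hy, hne⟩, hyi⟩
      refine ⟨⟨hyi, hy.2⟩, ?_⟩
      rw [← hs₀ ⟨y, hy⟩ i hyi]
      exact hne
    obtain ⟨hyUI, hne⟩ := (sf i).2.2 x hi (closure_mono hsub h1)
    refine ⟨⟨hxS, hyUI.2⟩, ?_⟩
    rw [hs₀ ⟨x, ⟨hxS, hyUI.2⟩⟩ i hyUI.1]
    exact hne
  refine ⟨⟨s₀, hlc, hscl⟩, ?_, ?_⟩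
  · intro i
    apply Subtype.ext
    funext y
    exact hs₀ ⟨y.1, ⟨leOfHom (Opens.leSupr U i) y.2.1, y.2.2⟩⟩ i y.2.1
  · intro t ht
    apply Subtype.ext
    funext x
    have h := ht (idx x)
    have h2 := congrFun (congrArg Subtype.val h) ⟨x.1, ⟨hidx x, x.2.2⟩⟩
    exact h2

/-- The sheaf `k_I` on `ℝ` for an interval `I`: locally constant functions on `V ∩ I`
whose support is closed in `V`. -/
def intervalSheaf (I : Set ℝ) :
    Sheaf (Opens.grothendieckTopology (TopCat.of ℝ)) (ModuleCat.{0} k) :=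
  ⟨intervalPresheaf k I, intervalPresheaf_isSheaf k I⟩
/-- The category of sheaves of `k`-vector spaces on `ℝ`. -/
abbrev RealSheafCat := Sheaf (Opens.grothendieckTopology (TopCat.of ℝ)) (ModuleCat.{0} k)

instance sheafHomSMul (F G : RealSheafCat k) : SMul k (F ⟶ G) :=
  ⟨fun c f => ⟨c • f.hom⟩⟩

instance sheafHomModule (F G : RealSheafCat k) : Module k (F ⟶ G) :=
  Function.Injective.module k
    { toFun := fun f : F ⟶ G => f.hom
      map_zero' := rfl
      map_add' := fun _ _ => rfl }
    (fun _ _ h => Sheaf.hom_ext h) (fun _ _ => rfl)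

instance : HasExt.{1} (RealSheafCat k) := by
  letI := HasDerivedCategory.standard (RealSheafCat k)
  exact hasExt_of_hasDerivedCategory _

/-- The interval `(a, b)` with possibly infinite endpoints. -/
def Ioo' (a b : EReal) : Set ℝ := {x : ℝ | a < (x : EReal) ∧ (x : EReal) < b}

/-- The interval `[a, b)` with a possibly infinite right endpoint. -/
def Ico' (a : ℝ) (b : EReal) : Set ℝ := {x : ℝ | a ≤ x ∧ (x : EReal) < b}

/-- The interval `(a, b]` with a possibly infinite left endpoint. -/
def Ioc' (a : EReal) (b : ℝ) : Set ℝ := {x : ℝ | a < (x : EReal) ∧ x ≤ b}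

/-- Identification of sheaves on the topological space `ℝ` with objects of `RealSheafCat`. -/
def toRS (F : TopCat.Sheaf (ModuleCat.{0} k) (TopCat.of ℝ)) : RealSheafCat k := F

/-! A morphism `f : k_I ⟶ k_J` with `I` closed is determined by the global section `t = f 1`
of `k_J`: near a point of `I` every section of `k_I` is a constant multiple of `1`, so
`f s = s * t` on `I ∩ J`, while `f s` vanishes off `I`. Since `J` is connected, `t` is a
constant `c` on `J`. If `c ≠ 0`, then `J` is the support of `t`, hence closed, and `J ⊆ I`.
Conversely, for closed `J ⊆ I` restriction of functions is a morphism with `c = 1`, so `f ↦ c`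
identifies `Hom(k_I, k_J)` with `k`. -/

open Opposite

section

variable {I J : Set ℝ}

def oneSec (hI : IsClosed I) (V : Set ℝ) : secSub k I V :=
  ⟨fun _ => 1, IsLocallyConstant.const 1, fun _ hxV hx =>
    ⟨⟨hxV, hI.closure_subset (closure_mono (fun _ hy => hy.1.2) hx)⟩, one_ne_zero⟩⟩

lemma app_resLM (f : intervalSheaf k I ⟶ intervalSheaf k J) {V W : Opens (TopCat.of ℝ)}
    (h : W ≤ V) (s : secSub k I V.1) :
    f.hom.app (op W) (resLM k I h s) = resLM k J h (f.hom.app (op V) s) :=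
  ConcreteCategory.congr_hom (f.hom.naturality (homOfLE h).op) s

lemma app_apply_eq_app_resLM_apply (f : intervalSheaf k I ⟶ intervalSheaf k J)
    {V W : Opens (TopCat.of ℝ)} (h : W ≤ V) (s : secSub k I V.1) {x : ℝ}
    (hx : x ∈ W.1 ∩ J) :
    (f.hom.app (op V) s).1 ⟨x, h hx.1, hx.2⟩ =
      (f.hom.app (op W) (resLM k I h s)).1 ⟨x, hx⟩ := by
  rw [app_resLM]
  rfl

lemma exists_resLM_eq_smul_oneSec (hI : IsClosed I) {V : Opens (TopCat.of ℝ)}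
    (s : secSub k I V.1) {x : ℝ} (hx : x ∈ V.1 ∩ I) :
    ∃ (W : Opens (TopCat.of ℝ)) (h : W ≤ V), x ∈ W ∧
      resLM k I h s = s.1 ⟨x, hx⟩ • oneSec k hI W.1 := by
  obtain ⟨U, hUopen, hxU, hUconst⟩ := s.2.1.exists_open ⟨x, hx⟩
  obtain ⟨O, hO, rfl⟩ := isOpen_induced_iff.mp hUopen
  refine ⟨V ⊓ ⟨O, hO⟩, inf_le_left, ⟨hx.1, hxU⟩, Subtype.ext (funext fun y => ?_)⟩
  change s.1 _ = s.1 ⟨x, hx⟩ * 1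
  rw [mul_one]
  exact hUconst _ y.2.1.2

def unitSection (hI : IsClosed I) (f : intervalSheaf k I ⟶ intervalSheaf k J) :
    secSub k J (⊤ : Opens (TopCat.of ℝ)).1 :=
  f.hom.app (op ⊤) (oneSec k hI _)

lemma app_apply_eq_mul_unitSection (hI : IsClosed I)
    (f : intervalSheaf k I ⟶ intervalSheaf k J)
    {V : Opens (TopCat.of ℝ)} (s : secSub k I V.1) {x : ℝ} (hx : x ∈ V.1 ∩ J)
    (hxI : x ∈ I) :
    (f.hom.app (op V) s).1 ⟨x, hx⟩ =
      s.1 ⟨x, hx.1, hxI⟩ * (unitSection k hI f).1 ⟨x, trivial, hx.2⟩ := by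
  obtain ⟨W, hWV, hxW, hres⟩ := exists_resLM_eq_smul_oneSec k hI s ⟨hx.1, hxI⟩
  rw [app_apply_eq_app_resLM_apply k f hWV s ⟨hxW, hx.2⟩, hres]
  erw [map_smul]
  exact congrArg (s.1 ⟨x, hx.1, hxI⟩ * ·)
    (app_apply_eq_app_resLM_apply k f (le_top : W ≤ ⊤) (oneSec k hI _) ⟨hxW, hx.2⟩).symm

lemma app_apply_eq_zero_of_notMem (hI : IsClosed I)
    (f : intervalSheaf k I ⟶ intervalSheaf k J)
    {V : Opens (TopCat.of ℝ)} (s : secSub k I V.1) {x : ℝ} (hx : x ∈ V.1 ∩ J)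
    (hxI : x ∉ I) :
    (f.hom.app (op V) s).1 ⟨x, hx⟩ = 0 := by
  let W : Opens (TopCat.of ℝ) := V ⊓ ⟨Iᶜ, hI.isOpen_compl⟩
  have hres : resLM k I (inf_le_left : W ≤ V) s = 0 :=
    Subtype.ext (funext fun y => absurd y.2.2 y.2.1.2)
  have hxW : x ∈ W.1 ∩ J := ⟨⟨hx.1, hxI⟩, hx.2⟩
  rw [app_apply_eq_app_resLM_apply k f inf_le_left s hxW, hres]
  erw [map_zero]
  rfl

lemma secSub_top_apply_eq (hJ : _root_.IsPreconnected J)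
    (t : secSub k J (⊤ : Opens (TopCat.of ℝ)).1) {x y : ℝ} (hx : x ∈ J) (hy : y ∈ J) :
    t.1 ⟨x, trivial, hx⟩ = t.1 ⟨y, trivial, hy⟩ := by
  have : PreconnectedSpace ↥((⊤ : Opens (TopCat.of ℝ)).1 ∩ J) :=
    Subtype.preconnectedSpace ((univ_inter J).symm ▸ hJ)
  exact t.2.1.apply_eq_of_preconnectedSpace _ _

lemma isClosed_of_secSub_top_apply_ne_zero (hJ : _root_.IsPreconnected J)
    (t : secSub k J (⊤ : Opens (TopCat.of ℝ)).1) {j₀ : ℝ} (hj₀ : j₀ ∈ J)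
    (h : t.1 ⟨j₀, trivial, hj₀⟩ ≠ 0) : IsClosed J := by
  refine closure_subset_iff_isClosed.mp fun x hx =>
    (t.2.2 x trivial (closure_mono ?_ hx)).1.2
  exact fun y hy => ⟨⟨trivial, hy⟩, by rwa [secSub_top_apply_eq k hJ t hy hj₀]⟩

lemma eq_zero_of_unitSection_apply_eq_zero (hI : IsClosed I)
    (hJ : _root_.IsPreconnected J) (f : intervalSheaf k I ⟶ intervalSheaf k J)
    {j₀ : ℝ} (hj₀ : j₀ ∈ J)
    (h : (unitSection k hI f).1 ⟨j₀, trivial, hj₀⟩ = 0) : f = 0 := by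
  refine Sheaf.hom_ext (NatTrans.ext (funext fun V => ?_))
  induction V using Opposite.rec with
  | op V =>
    refine ModuleCat.hom_ext (LinearMap.ext fun s => Subtype.ext (funext fun y => ?_))
    by_cases hyI : y.1 ∈ I
    · rw [app_apply_eq_mul_unitSection k hI f s y.2 hyI, secSub_top_apply_eq k hJ _ y.2.2 hj₀,
        h, mul_zero]
      rfl
    · exact app_apply_eq_zero_of_notMem k hI f s y.2 hyI

lemma mem_of_unitSection_apply_ne_zero (hI : IsClosed I)
    (f : intervalSheaf k I ⟶ intervalSheaf k J) {x : ℝ} (hx : x ∈ J)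
    (h : (unitSection k hI f).1 ⟨x, trivial, hx⟩ ≠ 0) : x ∈ I := by
  by_contra hxI
  exact h (app_apply_eq_zero_of_notMem k hI f (V := ⊤) _ ⟨trivial, hx⟩ hxI)

lemma comp_inclusion_mem_secSub (hJ : IsClosed J) (hJI : J ⊆ I) {V : Set ℝ}
    (s : secSub k I V) : s.1 ∘ inclusion (inter_subset_inter_right V hJI) ∈ secSub k J V := by
  refine ⟨s.2.1.comp_continuous (continuous_inclusion _), fun x hxV hx => ?_⟩
  have hsupp : {y : ℝ | ∃ h : y ∈ V ∩ J,
        (s.1 ∘ inclusion (inter_subset_inter_right V hJI)) ⟨y, h⟩ ≠ 0} ⊆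
      {y : ℝ | ∃ h : y ∈ V ∩ I, s.1 ⟨y, h⟩ ≠ 0} ∩ J :=
    fun y ⟨h, hy⟩ => ⟨⟨⟨h.1, hJI h.2⟩, hy⟩, h.2⟩
  have hx' := closure_mono hsupp hx
  exact ⟨⟨hxV, hJ.closure_subset (closure_mono inter_subset_right hx')⟩,
    (s.2.2 x hxV (closure_mono inter_subset_left hx')).2⟩

def restrictHom (hJ : IsClosed J) (hJI : J ⊆ I) : intervalSheaf k I ⟶ intervalSheaf k J :=
  ⟨{ app := fun _ => ModuleCat.ofHom
      { toFun := fun s => ⟨s.1 ∘ inclusion _, comp_inclusion_mem_secSub k hJ hJI s⟩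
        map_add' := fun _ _ => rfl
        map_smul' := fun _ _ => rfl }
     naturality := fun _ _ _ => rfl }⟩

def unitValue (hI : IsClosed I) {j₀ : ℝ} (hj₀ : j₀ ∈ J) :
    (intervalSheaf k I ⟶ intervalSheaf k J) →ₗ[k] k where
  toFun f := (unitSection k hI f).1 ⟨j₀, trivial, hj₀⟩
  map_add' _ _ := rfl
  map_smul' _ _ := rfl

lemma unitValue_bijective (hI : IsClosed I) (hJ : IsClosed J)
    (hJc : _root_.IsPreconnected J) (hJI : J ⊆ I) {j₀ : ℝ} (hj₀ : j₀ ∈ J) :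
    Function.Bijective (unitValue k hI hj₀) := by
  refine ⟨(injective_iff_map_eq_zero _).mpr fun f hf =>
      eq_zero_of_unitSection_apply_eq_zero k hI hJc f hj₀ hf,
    fun c => ⟨c • restrictHom k hJ hJI, ?_⟩⟩
  rw [map_smul]
  exact mul_one c

end

theorem hom_compact_interval_general (k : Type) [Field k] (a b : ℝ)
    (J : Set ℝ) (hJne : J.Nonempty) (hJ : J.OrdConnected) :
    ((IsClosed J ∧ J ⊆ Set.Icc a b) →
      Module.rank k (intervalSheaf k (Set.Icc a b) ⟶ intervalSheaf k J) = 1) ∧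
    (¬ (IsClosed J ∧ J ⊆ Set.Icc a b) →
      ∀ f : intervalSheaf k (Set.Icc a b) ⟶ intervalSheaf k J, f = 0) := by
  obtain ⟨j₀, hj₀⟩ := hJne
  have hJc := hJ.isPreconnected
  refine ⟨fun ⟨hJcl, hJI⟩ => ?_, fun hn f => ?_⟩
  · rw [(LinearEquiv.ofBijective _
      (unitValue_bijective k isClosed_Icc hJcl hJc hJI hj₀)).rank_eq, Module.rank_self]
  · by_contra hf
    have ht := mt (eq_zero_of_unitSection_apply_eq_zero k isClosed_Icc hJc f hj₀) hf
    exact hn ⟨isClosed_of_secSub_top_apply_ne_zero k hJc _ hj₀ ht, fun x hx =>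
      mem_of_unitSection_apply_ne_zero k isClosed_Icc f hx
        (by rwa [secSub_top_apply_eq k hJc _ hx hj₀])⟩

/-- For real numbers `a ≤ b` and a nonempty interval `J ⊆ ℝ`, the space
`Hom(k_{[a,b]}, k_J)` is one-dimensional over `k` if `J` is closed with `J ⊆ [a,b]`,
and is zero otherwise. -/
theorem hom_compact_interval (k : Type) [Field k] (a b : ℝ) (hab : a ≤ b)
    (J : Set ℝ) (hJne : J.Nonempty) (hJ : J.OrdConnected) :
    ((IsClosed J ∧ J ⊆ Set.Icc a b) →
      Module.rank k (intervalSheaf k (Set.Icc a b) ⟶ intervalSheaf k J) = 1) ∧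
    (¬ (IsClosed J ∧ J ⊆ Set.Icc a b) →
      ∀ f : intervalSheaf k (Set.Icc a b) ⟶ intervalSheaf k J, f = 0) :=
  hom_compact_interval_general k a b J hJne hJ

end
end

section
/- Let a, c ∈ ℝ ∪ {−∞}, b ∈ ℝ ∪ {+∞} and d ∈ ℝ, with a < b and c < d. Then the k-vector space Hom(k_{(a,b)}, k_{(c,d]}) is one-dimensional over k if c ≤ a < d, and is zero otherwise. -/
open CategoryTheory TopologicalSpace Set Topology

noncomputable section

variable (k : Type) [Field k]

/-!
Since `(a, b)` is open, every section of `k_{(a,b)}` is locally a multiple of the constant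
section `1` over `(a, b)` and vanishes near points outside `(a, b)`, so a morphism
`f : k_{(a,b)} ⟶ k_J` is determined by `f(1)`, a section of `k_J` over `(a, b)`. For
`J = (c, d]` this is a locally constant function on the interval `(a, b) ∩ (c, d]`, hence a
constant `λ`. If `c ≤ a`, then `(a, b) ∩ (c, d]` is closed in `(a, b)`, and restricting to it and
extending by zero is a morphism with `λ = 1`. Otherwise either the intersection is empty, or
`a < c` and `c ∈ (a, b) \ (c, d]` lies in the closure of the support of `f(1)`, which must be
closed in `(a, b)`; so `λ = 0`.
-/

namespace IntervalSheaf

open Opposite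

variable {k} {I J V : Set ℝ} {s : ↥(V ∩ I) → k}

lemma exists_isOpen_forall_eq_zero (hV : IsOpen V) (hs : s ∈ secSub k I V) {x : ℝ}
    (hxV : x ∈ V) (hxI : x ∉ I) :
    ∃ W, IsOpen W ∧ x ∈ W ∧ W ⊆ V ∧ ∀ y (hy : y ∈ V ∩ I), y ∈ W → s ⟨y, hy⟩ = 0 := by
  set T := {y : ℝ | ∃ h : y ∈ V ∩ I, s ⟨y, h⟩ ≠ 0}
  have hxT : x ∉ closure T := fun h => hxI (hs.2 x hxV h).1.2
  refine ⟨V ∩ (closure T)ᶜ, hV.inter isClosed_closure.isOpen_compl, ⟨hxV, hxT⟩,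
    inter_subset_left, fun y hy hyW => ?_⟩
  by_contra hne
  exact hyW.2 (subset_closure ⟨hy, hne⟩)

lemma exists_isOpen_forall_eq (hI : IsOpen I) (hV : IsOpen V) (hs : s ∈ secSub k I V)
    {x : ℝ} (hx : x ∈ V ∩ I) :
    ∃ W, IsOpen W ∧ x ∈ W ∧ W ⊆ V ∩ I ∧
      ∀ y (hy : y ∈ V ∩ I), y ∈ W → s ⟨y, hy⟩ = s ⟨x, hx⟩ := by
  obtain ⟨U, hU, hxU, hUconst⟩ := hs.1.exists_open (⟨x, hx⟩ : ↥(V ∩ I))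
  obtain ⟨O, hO, rfl⟩ := isOpen_induced_iff.mp hU
  exact ⟨O ∩ (V ∩ I), hO.inter (hV.inter hI), ⟨hxU, hx⟩, inter_subset_right,
    fun y hy hyW => hUconst ⟨y, hy⟩ hyW.1⟩

lemma apply_eq_of_isPreconnected (hs : s ∈ secSub k I V) (hVI : IsPreconnected (V ∩ I))
    (x y : ↥(V ∩ I)) : s x = s y :=
  haveI := Subtype.preconnectedSpace hVI
  hs.1.apply_eq_of_preconnectedSpace x y

lemma eq_zero_of_mem_closure (hs : s ∈ secSub k I V) (hVI : IsPreconnected (V ∩ I)) {x : ℝ}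
    (hxV : x ∈ V) (hxI : x ∉ I) (hx : x ∈ closure (V ∩ I)) : s = 0 := by
  funext y
  by_contra hy
  have hsupp : V ∩ I ⊆ {z : ℝ | ∃ h : z ∈ V ∩ I, s ⟨z, h⟩ ≠ 0} := fun z hz =>
    ⟨hz, apply_eq_of_isPreconnected hs hVI ⟨z, hz⟩ y ▸ hy⟩
  exact hxI (hs.2 x hxV (closure_mono hsupp hx)).1.2

variable (k) in
def one (I : Set ℝ) : secSub k I I :=
  ⟨fun _ => 1, IsLocallyConstant.const 1, fun _ hx _ => ⟨⟨hx, hx⟩, one_ne_zero⟩⟩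

lemma hom_app_apply_eq_app_resLM (f : intervalSheaf k I ⟶ intervalSheaf k J)
    {V W : Opens (TopCat.of ℝ)} (hWV : W ≤ V) (s : secSub k I V.1) {x : ℝ}
    (hx : x ∈ W.1 ∩ J) :
    (f.hom.app (op V) s).1 ⟨x, hWV hx.1, hx.2⟩ =
      (f.hom.app (op W) (resLM k I hWV s)).1 ⟨x, hx⟩ := by
  have h := congrArg (fun g => ((ConcreteCategory.hom g s).1 ⟨x, hx⟩ : k))
    (f.hom.naturality (homOfLE hWV).op)
  exact h.symm

lemma resLM_eq_smul_resLM_one (hI : IsOpen I) {V W : Opens (TopCat.of ℝ)} (hWV : W ≤ V)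
    (hWI : W ≤ ⟨I, hI⟩) (s : secSub k I V.1) {x : ℝ} (hx : x ∈ V.1 ∩ I)
    (hconst : ∀ y (hy : y ∈ V.1 ∩ I), y ∈ W → s.1 ⟨y, hy⟩ = s.1 ⟨x, hx⟩) :
    resLM k I hWV s = s.1 ⟨x, hx⟩ • resLM k I hWI (one k I) := by
  ext y
  exact (hconst y _ y.2.1).trans (mul_one _).symm

lemma hom_app_apply_of_mem (hI : IsOpen I) (f : intervalSheaf k I ⟶ intervalSheaf k J)
    (V : Opens (TopCat.of ℝ)) (s : secSub k I V.1) {x : ℝ} (hx : x ∈ V.1 ∩ J) (hxI : x ∈ I) :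
    (f.hom.app (op V) s).1 ⟨x, hx⟩ =
      s.1 ⟨x, hx.1, hxI⟩ * (f.hom.app (op ⟨I, hI⟩) (one k I)).1 ⟨x, hxI, hx.2⟩ := by
  obtain ⟨W, hW, hxW, hWVI, hconst⟩ := exists_isOpen_forall_eq hI V.2 s.2 ⟨hx.1, hxI⟩
  let WO : Opens (TopCat.of ℝ) := ⟨W, hW⟩
  have hWV : WO ≤ V := fun y hy => (hWVI hy).1
  have hWI : WO ≤ ⟨I, hI⟩ := fun y hy => (hWVI hy).2
  calc (f.hom.app (op V) s).1 ⟨x, hx⟩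
      = (f.hom.app (op WO) (resLM k I hWV s)).1 ⟨x, hxW, hx.2⟩ :=
        hom_app_apply_eq_app_resLM f hWV s ⟨hxW, hx.2⟩
    _ = s.1 ⟨x, hx.1, hxI⟩ * (f.hom.app (op WO) (resLM k I hWI (one k I))).1 ⟨x, hxW, hx.2⟩ := by
        rw [resLM_eq_smul_resLM_one hI hWV hWI s ⟨hx.1, hxI⟩ hconst]
        exact congrArg (fun t => t.1 ⟨x, hxW, hx.2⟩) ((f.hom.app (op WO)).hom.map_smul _ _)
    _ = _ := congrArg _ (hom_app_apply_eq_app_resLM f hWI (one k I) ⟨hxW, hx.2⟩).symm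

lemma hom_app_apply_of_notMem (f : intervalSheaf k I ⟶ intervalSheaf k J)
    (V : Opens (TopCat.of ℝ)) (s : secSub k I V.1) {x : ℝ} (hx : x ∈ V.1 ∩ J) (hxI : x ∉ I) :
    (f.hom.app (op V) s).1 ⟨x, hx⟩ = 0 := by
  obtain ⟨W, hW, hxW, hWV, hzero⟩ := exists_isOpen_forall_eq_zero V.2 s.2 hx.1 hxI
  let WO : Opens (TopCat.of ℝ) := ⟨W, hW⟩
  have hWV : WO ≤ V := hWV
  have hres : resLM k I hWV s = 0 := by
    ext y
    exact hzero y _ y.2.1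
  calc (f.hom.app (op V) s).1 ⟨x, hx⟩
      = (f.hom.app (op WO) (resLM k I hWV s)).1 ⟨x, hxW, hx.2⟩ :=
        hom_app_apply_eq_app_resLM f hWV s ⟨hxW, hx.2⟩
    _ = 0 := by
        rw [hres]
        exact congrArg (fun t => t.1 ⟨x, hxW, hx.2⟩) (f.hom.app (op WO)).hom.map_zero

lemma eq_zero_of_app_one_eq_zero (hI : IsOpen I) {f : intervalSheaf k I ⟶ intervalSheaf k J}
    (hf : f.hom.app (op ⟨I, hI⟩) (one k I) = 0) : f = 0 := by
  refine Sheaf.hom_ext <| NatTrans.ext <| funext fun V =>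
    ModuleCat.hom_ext <| LinearMap.ext fun s => ?_
  refine Subtype.ext (funext fun ⟨x, hx⟩ => ?_)
  by_cases hxI : x ∈ I
  · refine (hom_app_apply_of_mem hI f V.unop s hx hxI).trans ?_
    rw [hf]
    exact mul_zero _
  · exact hom_app_apply_of_notMem f V.unop s hx hxI

open scoped Classical in
def extendByZero (I : Set ℝ) {J V : Set ℝ} (s : ↥(V ∩ I) → k) : ↥(V ∩ J) → k :=
  fun y => if h : y.1 ∈ I then s ⟨y.1, y.2.1, h⟩ else 0

lemma extendByZero_of_mem {y : ↥(V ∩ J)} (h : y.1 ∈ I) :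
    extendByZero I s y = s ⟨y.1, y.2.1, h⟩ :=
  dif_pos h

lemma extendByZero_of_notMem {y : ↥(V ∩ J)} (h : y.1 ∉ I) :
    extendByZero I s y = 0 :=
  dif_neg h

lemma extendByZero_add (s t : ↥(V ∩ I) → k) :
    (extendByZero I (s + t) : ↥(V ∩ J) → k) = extendByZero I s + extendByZero I t := by
  funext y
  by_cases hy : y.1 ∈ I
  · simp only [Pi.add_apply, extendByZero_of_mem hy]
  · simp only [Pi.add_apply, extendByZero_of_notMem hy, add_zero]

lemma extendByZero_smul (c : k) (s : ↥(V ∩ I) → k) :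
    (extendByZero I (c • s) : ↥(V ∩ J) → k) = c • extendByZero I s := by
  funext y
  by_cases hy : y.1 ∈ I
  · simp only [Pi.smul_apply, extendByZero_of_mem hy]
  · simp only [Pi.smul_apply, extendByZero_of_notMem hy, smul_zero]

lemma isLocallyConstant_extendByZero (hI : IsOpen I) (hV : IsOpen V)
    (hs : s ∈ secSub k I V) : IsLocallyConstant (extendByZero I s : ↥(V ∩ J) → k) := by
  rw [IsLocallyConstant.iff_exists_open]
  intro x
  by_cases hxI : x.1 ∈ I
  · obtain ⟨W, hW, hxW, hWVI, hconst⟩ := exists_isOpen_forall_eq hI hV hs ⟨x.2.1, hxI⟩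
    refine ⟨Subtype.val ⁻¹' W, hW.preimage continuous_subtype_val, hxW, fun y hy => ?_⟩
    rw [extendByZero_of_mem (hWVI hy).2, extendByZero_of_mem hxI]
    exact hconst y.1 _ hy
  · obtain ⟨W, hW, hxW, -, hzero⟩ := exists_isOpen_forall_eq_zero hV hs x.2.1 hxI
    refine ⟨Subtype.val ⁻¹' W, hW.preimage continuous_subtype_val, hxW, fun y hy => ?_⟩
    rw [extendByZero_of_notMem hxI]
    by_cases hyI : y.1 ∈ I
    · rw [extendByZero_of_mem hyI]
      exact hzero y.1 _ hy
    · exact extendByZero_of_notMem hyI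

lemma extendByZero_mem (hI : IsOpen I) (hIJ : closure (I ∩ J) ∩ I ⊆ J) (hV : IsOpen V)
    (hs : s ∈ secSub k I V) : extendByZero I s ∈ secSub k J V := by
  refine ⟨isLocallyConstant_extendByZero hI hV hs, fun x hxV hx => ?_⟩
  have hsupp : {y : ℝ | ∃ h : y ∈ V ∩ J, extendByZero I s ⟨y, h⟩ ≠ 0} ⊆
      {y : ℝ | ∃ h : y ∈ V ∩ I, s ⟨y, h⟩ ≠ 0} ∩ (I ∩ J) := by
    rintro y ⟨hy, hne⟩
    by_cases hyI : y ∈ I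
    · rw [extendByZero_of_mem hyI] at hne
      exact ⟨⟨_, hne⟩, hyI, hy.2⟩
    · exact absurd (extendByZero_of_notMem hyI) hne
  obtain ⟨hxVI, hsx⟩ := hs.2 x hxV (closure_mono (hsupp.trans inter_subset_left) hx)
  have hxJ : x ∈ J := hIJ ⟨closure_mono (hsupp.trans inter_subset_right) hx, hxVI.2⟩
  refine ⟨⟨hxV, hxJ⟩, ?_⟩
  rwa [extendByZero_of_mem hxVI.2]

/-- The composite `k_I ↠ k_{I ∩ J} ↪ k_J`. -/
def extendByZeroHom (hI : IsOpen I) (hIJ : closure (I ∩ J) ∩ I ⊆ J) :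
    intervalSheaf k I ⟶ intervalSheaf k J :=
  ⟨{ app := fun V => ModuleCat.ofHom
      { toFun := fun s => ⟨extendByZero I s.1, extendByZero_mem hI hIJ V.unop.2 s.2⟩
        map_add' := fun s t => Subtype.ext (extendByZero_add s.1 t.1)
        map_smul' := fun c s => Subtype.ext (extendByZero_smul c s.1) }
     naturality := fun _ _ _ => rfl }⟩

lemma extendByZeroHom_app_one (hI : IsOpen I) (hIJ : closure (I ∩ J) ∩ I ⊆ J)
    (x : ↥(I ∩ J)) :
    ((extendByZeroHom hI hIJ).hom.app (op ⟨I, hI⟩) (one k I)).1 x = 1 :=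
  extendByZero_of_mem x.2.1

theorem rank_hom_eq_one (hI : IsOpen I) (hIJ : closure (I ∩ J) ∩ I ⊆ J)
    (hpre : IsPreconnected (I ∩ J)) (hne : (I ∩ J).Nonempty) :
    Module.rank k (intervalSheaf k I ⟶ intervalSheaf k J) = 1 := by
  obtain ⟨r, hr⟩ := hne
  let evalOne : (intervalSheaf k I ⟶ intervalSheaf k J) →ₗ[k] k :=
    { toFun := fun f => (f.hom.app (op ⟨I, hI⟩) (one k I)).1 ⟨r, hr⟩
      map_add' := fun _ _ => rfl
      map_smul' := fun _ _ => rfl }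
  have hinj : Function.Injective evalOne := by
    refine (injective_iff_map_eq_zero evalOne).2 fun f hf => eq_zero_of_app_one_eq_zero hI ?_
    refine Subtype.ext (funext fun x => ?_)
    exact (apply_eq_of_isPreconnected (f.hom.app (op ⟨I, hI⟩) (one k I)).2 hpre x ⟨r, hr⟩).trans hf
  have hsurj : Function.Surjective evalOne := fun c => ⟨c • extendByZeroHom hI hIJ, by
    rw [map_smul]
    change c * ((extendByZeroHom hI hIJ).hom.app (op ⟨I, hI⟩) (one k I)).1 ⟨r, hr⟩ = c
    rw [extendByZeroHom_app_one, mul_one]⟩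
  exact (LinearEquiv.ofBijective evalOne ⟨hinj, hsurj⟩).rank_eq.trans (Module.rank_self k)

section Intervals

variable {a b c : EReal} {d : ℝ}

lemma isOpen_Ioo' (a b : EReal) : IsOpen (Ioo' a b) :=
  isOpen_Ioo.preimage continuous_coe_real_ereal

lemma isPreconnected_Ioo'_inter_Ioc' (a b c : EReal) (d : ℝ) :
    IsPreconnected (Ioo' a b ∩ Ioc' c d) := by
  refine OrdConnected.isPreconnected ⟨fun x hx y hy z hz => ?_⟩
  have hxz : (x : EReal) ≤ z := EReal.coe_le_coe_iff.2 hz.1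
  have hzy : (z : EReal) ≤ y := EReal.coe_le_coe_iff.2 hz.2
  exact ⟨⟨hx.1.1.trans_le hxz, hzy.trans_lt hy.1.2⟩, hx.2.1.trans_le hxz, hz.2.trans hy.2.2⟩

lemma Ioo'_inter_Ioc'_nonempty (hab : a < b) (hca : c ≤ a) (had : a < d) :
    (Ioo' a b ∩ Ioc' c d).Nonempty := by
  obtain ⟨r, har, hr⟩ := EReal.exists_between_coe_real (lt_min hab had)
  exact ⟨r, ⟨har, hr.trans_le (min_le_left _ _)⟩, hca.trans_lt har,
    EReal.coe_le_coe_iff.1 (hr.trans_le (min_le_right _ _)).le⟩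

lemma closure_Ioo'_inter_Ioc'_inter_subset (hca : c ≤ a) :
    closure (Ioo' a b ∩ Ioc' c d) ∩ Ioo' a b ⊆ Ioc' c d := by
  rintro x ⟨hxcl, hxa, -⟩
  have hsub : Ioo' a b ∩ Ioc' c d ⊆ Iic d := fun y hy => hy.2.2
  exact ⟨hca.trans_lt hxa, isClosed_Iic.closure_subset (closure_mono hsub hxcl)⟩

lemma secSub_Ioc'_Ioo'_eq_zero (h : ¬(c ≤ a ∧ a < d)) (t : secSub k (Ioc' c d) (Ioo' a b)) :
    t = 0 := by
  refine Subtype.ext (funext fun x => ?_)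
  obtain ⟨x, ⟨hax, hxb⟩, hcx, hxd⟩ := x
  have hac : a < c := not_le.1 fun hca => h ⟨hca, hax.trans_le (EReal.coe_le_coe_iff.2 hxd)⟩
  induction c using EReal.rec with
  | bot => exact absurd hac not_lt_bot
  | top => exact absurd hcx not_top_lt
  | coe c =>
    have hcx' : c < x := EReal.coe_lt_coe_iff.1 hcx
    have hmem : Ioc c x ⊆ Ioo' a b ∩ Ioc' c d := fun y hy =>
      ⟨⟨hac.trans (EReal.coe_lt_coe_iff.2 hy.1), (EReal.coe_le_coe_iff.2 hy.2).trans_lt hxb⟩,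
        EReal.coe_lt_coe_iff.2 hy.1, hy.2.trans hxd⟩
    have hc : c ∈ closure (Ioo' a b ∩ Ioc' c d) :=
      closure_mono hmem (closure_Ioc hcx'.ne ▸ left_mem_Icc.2 hcx'.le)
    have hcI : c ∈ Ioo' a b := ⟨hac, (EReal.coe_lt_coe_iff.2 hcx').trans hxb⟩
    exact congrFun (eq_zero_of_mem_closure t.2 (isPreconnected_Ioo'_inter_Ioc' a b c d) hcI
      (fun hc => lt_irrefl _ hc.1) hc) _

end Intervals

end IntervalSheaf

theorem hom_open_ioc_general (k : Type) [Field k] (a b : EReal) (hab : a < b)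
    (c : EReal) (d : ℝ) :
    ((c ≤ a ∧ a < (d : EReal)) →
      Module.rank k (intervalSheaf k (Ioo' a b) ⟶ intervalSheaf k (Ioc' c d)) = 1) ∧
    (¬ (c ≤ a ∧ a < (d : EReal)) →
      ∀ f : intervalSheaf k (Ioo' a b) ⟶ intervalSheaf k (Ioc' c d), f = 0) :=
  open IntervalSheaf in
  ⟨fun ⟨hca, had⟩ => rank_hom_eq_one (isOpen_Ioo' a b) (closure_Ioo'_inter_Ioc'_inter_subset hca)
      (isPreconnected_Ioo'_inter_Ioc' a b c d) (Ioo'_inter_Ioc'_nonempty hab hca had),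
    fun h _ => eq_zero_of_app_one_eq_zero (isOpen_Ioo' a b) (secSub_Ioc'_Ioo'_eq_zero h _)⟩

/-- For `a, c ∈ ℝ ∪ {−∞}`, `b ∈ ℝ ∪ {+∞}`, `d ∈ ℝ`, with `a < b` and `c < d`,
the space `Hom(k_{(a,b)}, k_{(c,d]})` is one-dimensional over `k` if `c ≤ a < d`,
and is zero otherwise. -/
theorem hom_open_ioc (k : Type) [Field k] (a b : EReal) (hab : a < b)
    (c : EReal) (d : ℝ) (hcd : c < (d : EReal)) :
    ((c ≤ a ∧ a < (d : EReal)) →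
      Module.rank k (intervalSheaf k (Ioo' a b) ⟶ intervalSheaf k (Ioc' c d)) = 1) ∧
    (¬ (c ≤ a ∧ a < (d : EReal)) →
      ∀ f : intervalSheaf k (Ioo' a b) ⟶ intervalSheaf k (Ioc' c d), f = 0) :=
  hom_open_ioc_general k a b hab c d

end
end
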